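/- arXiv:1407.1464 — 3 statements merged into one kernel-verified Lean document; each statement's English description precedes it below -/
import Mathlib

section
/- Let ρ > 0, c > 0 and u, v, w ∈ ℝ, and set U = (u, v, w, p). Then the matrices A₁(U), A₂(U), A₃(U) are symmetric, and if in addition u > c then A₁(U) is positive definite; hence the steady Euler system A₁(U)∂ₓU + A₂(U)∂ᵧU + A₃(U)∂_zU = 0 is symmetric hyperbolic with x regarded as the time-like direction. -/
/-! The quadratic form of `A₁(U)` at `ξ` is `ρu (ξ₁² + ξ₂²)` plus the binary form of
`!![ρu, 1; 1, u/(ρc²)]` at `(ξ₀, ξ₃)`. For `u > c > 0` the corner `ρu` is positive and the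
determinant is `u²/c² - 1 > 0`, so both parts are positive definite. -/

open Matrix

/-- The matrix `A₁(U)` of the steady isentropic Euler system. -/
noncomputable def A1 (ρ c u : ℝ) : Matrix (Fin 4) (Fin 4) ℝ :=
  !![ρ * u, 0, 0, 1;
     0, ρ * u, 0, 0;
     0, 0, ρ * u, 0;
     1, 0, 0, u / (ρ * c ^ 2)]

/-- The matrix `A₂(U)` of the steady isentropic Euler system. -/
noncomputable def A2 (ρ c v : ℝ) : Matrix (Fin 4) (Fin 4) ℝ :=
  !![ρ * v, 0, 0, 0;
     0, ρ * v, 0, 1;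
     0, 0, ρ * v, 0;
     0, 1, 0, v / (ρ * c ^ 2)]

/-- The matrix `A₃(U)` of the steady isentropic Euler system. -/
noncomputable def A3 (ρ c w : ℝ) : Matrix (Fin 4) (Fin 4) ℝ :=
  !![ρ * w, 0, 0, 0;
     0, ρ * w, 0, 0;
     0, 0, ρ * w, 1;
     0, 0, 1, w / (ρ * c ^ 2)]

theorem binary_quadratic_pos {a b t x y : ℝ} (ha : 0 < a) (hdisc : b ^ 2 < a * t)
    (hxy : x ≠ 0 ∨ y ≠ 0) : 0 < a * x ^ 2 + 2 * b * x * y + t * y ^ 2 := by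
  rcases eq_or_ne y 0 with rfl | hy
  · have hx : x ≠ 0 := by simpa using hxy
    simpa using mul_pos ha (sq_pos_of_ne_zero hx)
  · have hsq : a * (a * x ^ 2 + 2 * b * x * y + t * y ^ 2) =
        (a * x + b * y) ^ 2 + (a * t - b ^ 2) * y ^ 2 := by ring
    refine pos_of_mul_pos_right (a := a) ?_ ha.le
    rw [hsq]
    nlinarith [sq_nonneg (a * x + b * y), sq_pos_of_ne_zero hy]

theorem A1_isSymm (ρ c u : ℝ) : (A1 ρ c u).IsSymm :=
  IsSymm.ext fun i j => by fin_cases i <;> fin_cases j <;> rfl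

theorem A2_isSymm (ρ c v : ℝ) : (A2 ρ c v).IsSymm :=
  IsSymm.ext fun i j => by fin_cases i <;> fin_cases j <;> rfl

theorem A3_isSymm (ρ c w : ℝ) : (A3 ρ c w).IsSymm :=
  IsSymm.ext fun i j => by fin_cases i <;> fin_cases j <;> rfl

theorem dotProduct_A1_mulVec (ρ c u : ℝ) (x : Fin 4 → ℝ) :
    star x ⬝ᵥ A1 ρ c u *ᵥ x =
      (ρ * u * x 0 ^ 2 + 2 * x 0 * x 3 + u / (ρ * c ^ 2) * x 3 ^ 2) +
        ρ * u * (x 1 ^ 2 + x 2 ^ 2) := by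
  simp only [dotProduct, Pi.star_apply, star_trivial, mulVec, A1, of_apply, cons_val',
    cons_val_fin_one, Fin.sum_univ_four, cons_val_zero, cons_val_one, cons_val, zero_mul, add_zero,
    one_mul, zero_add]
  ring

theorem A1_posDef {ρ c u : ℝ} (hρ : 0 < ρ) (hc : 0 < c) (hu : c < u) : (A1 ρ c u).PosDef := by
  have hu0 : 0 < u := hc.trans hu
  have hρu : 0 < ρ * u := mul_pos hρ hu0
  have hdisc : 1 ^ 2 < ρ * u * (u / (ρ * c ^ 2)) := by
    rw [one_pow, show ρ * u * (u / (ρ * c ^ 2)) = (u / c) ^ 2 by field_simp,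
      one_lt_sq_iff₀ (div_pos hu0 hc).le, one_lt_div hc]
    exact hu
  refine .of_dotProduct_mulVec_pos (isHermitian_iff_isSymm.mpr (A1_isSymm ρ c u)) fun x hx => ?_
  rw [dotProduct_A1_mulVec]
  by_cases h03 : x 0 ≠ 0 ∨ x 3 ≠ 0
  · have hx03 := binary_quadratic_pos hρu hdisc h03
    rw [mul_one] at hx03
    have hx12 : 0 ≤ ρ * u * (x 1 ^ 2 + x 2 ^ 2) := mul_nonneg hρu.le (by positivity)
    linarith
  · push Not at h03
    have h12 : x 1 ≠ 0 ∨ x 2 ≠ 0 := by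
      by_contra! h12
      exact hx (funext fun i => by fin_cases i <;> simp [h03, h12])
    have hx12 : 0 < x 1 ^ 2 + x 2 ^ 2 := by rcases h12 with h | h <;> positivity
    simpa [h03] using mul_pos hρu hx12

theorem stmt0_general (ρ c u v w : ℝ) (hρ : 0 < ρ) (hc : 0 < c) :
    (A1 ρ c u).IsSymm ∧ (A2 ρ c v).IsSymm ∧ (A3 ρ c w).IsSymm ∧
      (c < u → (A1 ρ c u).PosDef) :=
  ⟨A1_isSymm ρ c u, A2_isSymm ρ c v, A3_isSymm ρ c w, A1_posDef hρ hc⟩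

/-- The matrices `A₁(U)`, `A₂(U)`, `A₃(U)` are symmetric, and if moreover `u > c`
then `A₁(U)` is positive definite, i.e. the steady Euler system is symmetric
hyperbolic with `x` as time-like direction. -/
theorem stmt0 (ρ c u v w p : ℝ) (hρ : 0 < ρ) (hc : 0 < c) :
    (A1 ρ c u).IsSymm ∧ (A2 ρ c v).IsSymm ∧ (A3 ρ c w).IsSymm ∧
      (c < u → (A1 ρ c u).PosDef) :=
  stmt0_general ρ c u v w hρ hc
end

section
/- (Alinhac's good-unknown identity.) Let A₁, A₂, A₃ : ℝ⁴ → M₄(ℝ) be C¹ matrix-valued maps, Ω ⊆ ℝ³ open, U : Ω → ℝ⁴ and Ψ : Ω → ℝ of class C² with ∂ᵧΨ ≠ 0 on Ω, and V : Ω → ℝ⁴, Φ : Ω → ℝ of class C¹. Define L(U,∇Ψ)W := A₁(U)∂ₓW + (1/∂ᵧΨ)(A₂(U) − ∂ₓΨ·A₁(U) − ∂_zΨ·A₃(U))∂ᵧW + A₃(U)∂_zW; C(U,∇U,∇Ψ)W := (dA₁(U)·W)∂ₓU + (dA₃(U)·W)∂_zU + (1/∂ᵧΨ)[dA₂(U)·W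 − ∂ₓΨ(dA₁(U)·W) − ∂_zΨ(dA₃(U)·W)]∂ᵧU, where dAᵢ(U)·W denotes the directional derivative of Aᵢ at U in direction W; and the full linearized operator L′(U,∇Ψ)(V,Φ) := L(U,∇Ψ)V + C(U,∇U,∇Ψ)V − (∂ᵧΦ/(∂ᵧΨ)²)(A₂(U) − ∂ₓΨ·A₁(U) − ∂_zΨ·A₃(U))∂ᵧU − (1/∂ᵧΨ)(∂ₓΦ·A₁(U) + ∂_zΦ·A₃(U))∂ᵧU. Then, with the good unknown V̇ := V − (Φ/∂ᵧΨ)∂ᵧU, the following identity holds pointwise on Ω: L′(U,∇Ψ)(V,Φ) = L(U,∇Ψ)V̇ + C(U,∇U,∇Ψ)V̇ + (Φ/∂ᵧΨ)∂ᵧ[L(U,∇Ψ)U]. -/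
open Matrix

/-- Partial derivative in the `x`-direction of a function on `ℝ × ℝ × ℝ`. -/
noncomputable def pdx {F : Type*} [NormedAddCommGroup F] [NormedSpace ℝ F]
    (f : ℝ × ℝ × ℝ → F) (q : ℝ × ℝ × ℝ) : F := fderiv ℝ f q (1, 0, 0)

/-- Partial derivative in the `y`-direction of a function on `ℝ × ℝ × ℝ`. -/
noncomputable def pdy {F : Type*} [NormedAddCommGroup F] [NormedSpace ℝ F]
    (f : ℝ × ℝ × ℝ → F) (q : ℝ × ℝ × ℝ) : F := fderiv ℝ f q (0, 1, 0)

/-- Partial derivative in the `z`-direction of a function on `ℝ × ℝ × ℝ`. -/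
noncomputable def pdz {F : Type*} [NormedAddCommGroup F] [NormedSpace ℝ F]
    (f : ℝ × ℝ × ℝ → F) (q : ℝ × ℝ × ℝ) : F := fderiv ℝ f q (0, 0, 1)

/-- Directional derivative `dA(U)·W` of a matrix-valued map, entrywise. -/
noncomputable def dA (A : (Fin 4 → ℝ) → Matrix (Fin 4) (Fin 4) ℝ)
    (U W : Fin 4 → ℝ) : Matrix (Fin 4) (Fin 4) ℝ :=
  Matrix.of fun i j => fderiv ℝ (fun u => A u i j) U W

/-- The boundary matrix `A₂(U) − ∂ₓΨ·A₁(U) − ∂_zΨ·A₃(U)`. -/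
noncomputable def coefMat (A₁ A₂ A₃ : (Fin 4 → ℝ) → Matrix (Fin 4) (Fin 4) ℝ)
    (U : ℝ × ℝ × ℝ → Fin 4 → ℝ) (Ψ : ℝ × ℝ × ℝ → ℝ) (q : ℝ × ℝ × ℝ) :
    Matrix (Fin 4) (Fin 4) ℝ :=
  A₂ (U q) - pdx Ψ q • A₁ (U q) - pdz Ψ q • A₃ (U q)

/-- The operator `L(U,∇Ψ)W`. -/
noncomputable def Lop (A₁ A₂ A₃ : (Fin 4 → ℝ) → Matrix (Fin 4) (Fin 4) ℝ)
    (U : ℝ × ℝ × ℝ → Fin 4 → ℝ) (Ψ : ℝ × ℝ × ℝ → ℝ)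
    (W : ℝ × ℝ × ℝ → Fin 4 → ℝ) (q : ℝ × ℝ × ℝ) : Fin 4 → ℝ :=
  A₁ (U q) *ᵥ pdx W q + (1 / pdy Ψ q) • (coefMat A₁ A₂ A₃ U Ψ q *ᵥ pdy W q)
    + A₃ (U q) *ᵥ pdz W q

/-- The zero-order operator `C(U,∇U,∇Ψ)W`. -/
noncomputable def Cop (A₁ A₂ A₃ : (Fin 4 → ℝ) → Matrix (Fin 4) (Fin 4) ℝ)
    (U : ℝ × ℝ × ℝ → Fin 4 → ℝ) (Ψ : ℝ × ℝ × ℝ → ℝ)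
    (W : ℝ × ℝ × ℝ → Fin 4 → ℝ) (q : ℝ × ℝ × ℝ) : Fin 4 → ℝ :=
  dA A₁ (U q) (W q) *ᵥ pdx U q + dA A₃ (U q) (W q) *ᵥ pdz U q
    + (1 / pdy Ψ q) •
        ((dA A₂ (U q) (W q) - pdx Ψ q • dA A₁ (U q) (W q)
            - pdz Ψ q • dA A₃ (U q) (W q)) *ᵥ pdy U q)

/-- The full linearized operator `L′(U,∇Ψ)(V,Φ)`. -/
noncomputable def L'op (A₁ A₂ A₃ : (Fin 4 → ℝ) → Matrix (Fin 4) (Fin 4) ℝ)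
    (U : ℝ × ℝ × ℝ → Fin 4 → ℝ) (Ψ : ℝ × ℝ × ℝ → ℝ)
    (V : ℝ × ℝ × ℝ → Fin 4 → ℝ) (Φ : ℝ × ℝ × ℝ → ℝ) (q : ℝ × ℝ × ℝ) : Fin 4 → ℝ :=
  Lop A₁ A₂ A₃ U Ψ V q + Cop A₁ A₂ A₃ U Ψ V q
    - (pdy Φ q / (pdy Ψ q) ^ 2) • (coefMat A₁ A₂ A₃ U Ψ q *ᵥ pdy U q)
    - (1 / pdy Ψ q) • ((pdx Φ q • A₁ (U q) + pdz Φ q • A₃ (U q)) *ᵥ pdy U q)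

/-!
Write `σ(ξ)` for the principal symbol of `L = L(U,∇Ψ)` and `g = Φ/∂ᵧΨ`. Three identities hold:
the Leibniz rule `L(gW) = g·LW + σ(∇g)W`; the commutator formula
`∂ᵧ(LU) = L(∂ᵧU) + C(∂ᵧU) − (1/∂ᵧΨ)·σ(∇∂ᵧΨ)∂ᵧU`, obtained by differentiating the coefficients
of `L` and using the symmetry of the second derivatives of `U` and `Ψ`; and
`L′(V,Φ) = LV + CV − (1/∂ᵧΨ)·σ(∇Φ)∂ᵧU`. As `C` is of order zero and `σ` is linear in the
covector, the quotient rule `σ(∇g) = σ(∇Φ)/∂ᵧΨ − Φ·σ(∇∂ᵧΨ)/(∂ᵧΨ)²` makes everything cancel.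
-/

section Calculus

variable {E F : Type*} [NormedAddCommGroup E] [NormedSpace ℝ E]
  [NormedAddCommGroup F] [NormedSpace ℝ F] {q : E}

theorem fderiv_div_apply {f g : E → ℝ} (hf : DifferentiableAt ℝ f q)
    (hg : DifferentiableAt ℝ g q) (hq : g q ≠ 0) (v : E) :
    fderiv ℝ (fun p => f p / g p) q v
      = (fderiv ℝ f q v * g q - f q * fderiv ℝ g q v) / g q ^ 2 := by
  have hinv : HasFDerivAt (fun p => (g p)⁻¹) (-(g q ^ 2)⁻¹ • fderiv ℝ g q) q :=
    (hasDerivAt_inv hq).comp_hasFDerivAt q hg.hasFDerivAt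
  simp only [div_eq_mul_inv]
  rw [(hf.hasFDerivAt.fun_mul hinv).fderiv]
  simp only [_root_.add_apply, _root_.smul_apply, smul_eq_mul]
  field_simp
  ring

theorem ContDiffAt.differentiableAt_fderiv_apply {f : E → F} (hf : ContDiffAt ℝ 2 f q) (a : E) :
    DifferentiableAt ℝ (fun p => fderiv ℝ f p a) q :=
  ((hf.fderiv_right one_add_one_eq_two.le).differentiableAt one_ne_zero).clm_apply
    (differentiableAt_const a)

theorem ContDiffAt.fderiv_fderiv_apply_comm {f : E → F} (hf : ContDiffAt ℝ 2 f q) (a b : E) :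
    fderiv ℝ (fun p => fderiv ℝ f p a) q b = fderiv ℝ (fun p => fderiv ℝ f p b) q a := by
  have hDf := (hf.fderiv_right one_add_one_eq_two.le).differentiableAt one_ne_zero
  rw [fderiv_clm_apply hDf (differentiableAt_const a),
    fderiv_clm_apply hDf (differentiableAt_const b)]
  simpa using hf.isSymmSndFDerivAt (by simp) b a

end Calculus

section EntrywiseDerivative

variable {E G : Type*} [NormedAddCommGroup E] [NormedSpace ℝ E]
  [NormedAddCommGroup G] [NormedSpace ℝ G] {m n : Type*} {q : E}

noncomputable def fderivEntry (M : E → Matrix m n ℝ) (q v : E) : Matrix m n ℝ :=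
  Matrix.of fun i j => fderiv ℝ (fun p => M p i j) q v

theorem fderivEntry_comp {A : G → Matrix m n ℝ} {U : E → G}
    (hA : ∀ i j, DifferentiableAt ℝ (fun u => A u i j) (U q)) (hU : DifferentiableAt ℝ U q)
    (v : E) : fderivEntry (fun p => A (U p)) q v = fderivEntry A (U q) (fderiv ℝ U q v) := by
  ext i j
  change fderiv ℝ ((fun u => A u i j) ∘ U) q v = _
  rw [fderiv_comp q (hA i j) hU]
  rfl

variable [Fintype n]

theorem differentiableAt_mulVec {M : E → Matrix m n ℝ} {w : E → n → ℝ}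
    (hM : ∀ i j, DifferentiableAt ℝ (fun p => M p i j) q) (hw : DifferentiableAt ℝ w q) :
    DifferentiableAt ℝ (fun p => M p *ᵥ w p) q :=
  differentiableAt_pi.2 fun i =>
    DifferentiableAt.fun_sum fun j _ => (hM i j).mul (differentiableAt_pi.1 hw j)

theorem fderiv_mulVec_apply {M : E → Matrix m n ℝ} {w : E → n → ℝ}
    (hM : ∀ i j, DifferentiableAt ℝ (fun p => M p i j) q) (hw : DifferentiableAt ℝ w q) (v : E) :
    fderiv ℝ (fun p => M p *ᵥ w p) q v = fderivEntry M q v *ᵥ w q + M q *ᵥ fderiv ℝ w q v := by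
  ext i
  have hwj := differentiableAt_pi.1 hw
  rw [fderiv_pi (fun i => differentiableAt_pi.1 (differentiableAt_mulVec hM hw) i)]
  change fderiv ℝ (fun p => ∑ j, M p i j * w p j) q v = _
  rw [fderiv_fun_sum fun j _ => (hM i j).fun_mul (hwj j), fderiv_pi hwj]
  simp [fderiv_fun_mul (hM _ _) (hwj _), mulVec, dotProduct, fderivEntry, Finset.sum_add_distrib,
    add_comm, mul_comm]

end EntrywiseDerivative

section GoodUnknown

variable {A₁ A₂ A₃ : (Fin 4 → ℝ) → Matrix (Fin 4) (Fin 4) ℝ} {U : ℝ × ℝ × ℝ → Fin 4 → ℝ}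
  {Ψ : ℝ × ℝ × ℝ → ℝ} {q : ℝ × ℝ × ℝ}

/-- The principal symbol of `L(U,∇Ψ)` at the covector `∇c(q)`. -/
noncomputable def Lsymbol (A₁ A₂ A₃ : (Fin 4 → ℝ) → Matrix (Fin 4) (Fin 4) ℝ)
    (U : ℝ × ℝ × ℝ → Fin 4 → ℝ) (Ψ c : ℝ × ℝ × ℝ → ℝ) (q : ℝ × ℝ × ℝ) :
    Matrix (Fin 4) (Fin 4) ℝ :=
  pdx c q • A₁ (U q) + (pdy c q / pdy Ψ q) • coefMat A₁ A₂ A₃ U Ψ q + pdz c q • A₃ (U q)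

theorem L'op_eq_Lop_add_Cop_sub (V : ℝ × ℝ × ℝ → Fin 4 → ℝ) (Φ : ℝ × ℝ × ℝ → ℝ) :
    L'op A₁ A₂ A₃ U Ψ V Φ q
      = Lop A₁ A₂ A₃ U Ψ V q + Cop A₁ A₂ A₃ U Ψ V q
        - (1 / pdy Ψ q) • (Lsymbol A₁ A₂ A₃ U Ψ Φ q *ᵥ pdy U q) := by
  simp only [L'op, Lsymbol, add_mulVec, smul_mulVec]
  module

theorem Lsymbol_div {f g : ℝ × ℝ × ℝ → ℝ} (hf : DifferentiableAt ℝ f q)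
    (hg : DifferentiableAt ℝ g q) (hq : g q ≠ 0) :
    Lsymbol A₁ A₂ A₃ U Ψ (fun p => f p / g p) q
      = (1 / g q) • Lsymbol A₁ A₂ A₃ U Ψ f q - (f q / g q ^ 2) • Lsymbol A₁ A₂ A₃ U Ψ g q := by
  simp only [Lsymbol, pdx, pdy, pdz, fderiv_div_apply hf hg hq]
  match_scalars <;> field_simp

theorem dA_sub (A : (Fin 4 → ℝ) → Matrix (Fin 4) (Fin 4) ℝ) (u x y : Fin 4 → ℝ) :
    dA A u (x - y) = dA A u x - dA A u y := by
  ext i j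
  simp [dA]

theorem dA_smul (A : (Fin 4 → ℝ) → Matrix (Fin 4) (Fin 4) ℝ) (u x : Fin 4 → ℝ) (c : ℝ) :
    dA A u (c • x) = c • dA A u x := by
  ext i j
  simp [dA]

theorem Cop_sub_smul (V W : ℝ × ℝ × ℝ → Fin 4 → ℝ) (c : ℝ × ℝ × ℝ → ℝ) :
    Cop A₁ A₂ A₃ U Ψ (fun p => V p - c p • W p) q
      = Cop A₁ A₂ A₃ U Ψ V q - c q • Cop A₁ A₂ A₃ U Ψ W q := by
  simp only [Cop, dA_sub, dA_smul, sub_mulVec, smul_mulVec]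
  module

theorem Lop_sub {V W : ℝ × ℝ × ℝ → Fin 4 → ℝ} (hV : DifferentiableAt ℝ V q)
    (hW : DifferentiableAt ℝ W q) :
    Lop A₁ A₂ A₃ U Ψ (fun p => V p - W p) q = Lop A₁ A₂ A₃ U Ψ V q - Lop A₁ A₂ A₃ U Ψ W q := by
  simp only [Lop, pdx, pdy, pdz, fderiv_fun_sub hV hW, _root_.sub_apply, mulVec_sub]
  module

theorem Lop_smul {c : ℝ × ℝ × ℝ → ℝ} {W : ℝ × ℝ × ℝ → Fin 4 → ℝ} (hc : DifferentiableAt ℝ c q)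
    (hW : DifferentiableAt ℝ W q) :
    Lop A₁ A₂ A₃ U Ψ (fun p => c p • W p) q
      = c q • Lop A₁ A₂ A₃ U Ψ W q + Lsymbol A₁ A₂ A₃ U Ψ c q *ᵥ W q := by
  simp only [Lop, Lsymbol, pdx, pdy, pdz, fderiv_fun_smul hc hW, _root_.add_apply,
    _root_.smul_apply, ContinuousLinearMap.smulRight_apply, mulVec_add, mulVec_smul, add_mulVec,
    smul_mulVec]
  module

theorem dA_eq_fderivEntry (A : (Fin 4 → ℝ) → Matrix (Fin 4) (Fin 4) ℝ) : dA A = fderivEntry A :=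
  rfl

theorem differentiableAt_coefMat_apply
    (hA₁ : ∀ i j, DifferentiableAt ℝ (fun u => A₁ u i j) (U q))
    (hA₂ : ∀ i j, DifferentiableAt ℝ (fun u => A₂ u i j) (U q))
    (hA₃ : ∀ i j, DifferentiableAt ℝ (fun u => A₃ u i j) (U q)) (hU : DifferentiableAt ℝ U q)
    (hΨx : DifferentiableAt ℝ (pdx Ψ) q) (hΨz : DifferentiableAt ℝ (pdz Ψ) q) (i j : Fin 4) :
    DifferentiableAt ℝ (fun p => coefMat A₁ A₂ A₃ U Ψ p i j) q :=
  (((hA₂ i j).comp q hU).sub (hΨx.mul ((hA₁ i j).comp q hU))).sub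
    (hΨz.mul ((hA₃ i j).comp q hU))

theorem fderivEntry_coefMat
    (hA₁ : ∀ i j, DifferentiableAt ℝ (fun u => A₁ u i j) (U q))
    (hA₂ : ∀ i j, DifferentiableAt ℝ (fun u => A₂ u i j) (U q))
    (hA₃ : ∀ i j, DifferentiableAt ℝ (fun u => A₃ u i j) (U q)) (hU : DifferentiableAt ℝ U q)
    (hΨx : DifferentiableAt ℝ (pdx Ψ) q) (hΨz : DifferentiableAt ℝ (pdz Ψ) q) (v : ℝ × ℝ × ℝ) :
    fderivEntry (coefMat A₁ A₂ A₃ U Ψ) q v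
      = dA A₂ (U q) (fderiv ℝ U q v) - pdx Ψ q • dA A₁ (U q) (fderiv ℝ U q v)
        - pdz Ψ q • dA A₃ (U q) (fderiv ℝ U q v)
        - (fderiv ℝ (pdx Ψ) q v • A₁ (U q) + fderiv ℝ (pdz Ψ) q v • A₃ (U q)) := by
  ext i j
  have hAU (A : (Fin 4 → ℝ) → Matrix (Fin 4) (Fin 4) ℝ)
      (hA : ∀ i j, DifferentiableAt ℝ (fun u => A u i j) (U q)) :
      DifferentiableAt ℝ (fun p => A (U p) i j) q :=
    (hA i j).comp q hU
  simp only [fderivEntry, coefMat, of_apply, Matrix.sub_apply, Matrix.smul_apply, smul_eq_mul]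
  rw [fderiv_fun_sub ((hAU A₂ hA₂).fun_sub (hΨx.fun_mul (hAU A₁ hA₁))) (hΨz.fun_mul (hAU A₃ hA₃)),
    fderiv_fun_sub (hAU A₂ hA₂) (hΨx.fun_mul (hAU A₁ hA₁)), fderiv_fun_mul hΨx (hAU A₁ hA₁),
    fderiv_fun_mul hΨz (hAU A₃ hA₃)]
  have hAU' (A : (Fin 4 → ℝ) → Matrix (Fin 4) (Fin 4) ℝ)
      (hA : ∀ i j, DifferentiableAt ℝ (fun u => A u i j) (U q)) :
      fderiv ℝ (fun p => A (U p) i j) q v = dA A (U q) (fderiv ℝ U q v) i j :=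
    congrFun (congrFun (fderivEntry_comp hA hU v) i) j
  simp only [_root_.sub_apply, _root_.add_apply, _root_.smul_apply, smul_eq_mul]
  rw [hAU' A₁ hA₁, hAU' A₂ hA₂, hAU' A₃ hA₃]
  simp only [Matrix.add_apply, Matrix.smul_apply, smul_eq_mul]
  ring

theorem fderiv_Lop_self
    (hA₁ : ∀ i j, DifferentiableAt ℝ (fun u => A₁ u i j) (U q))
    (hA₂ : ∀ i j, DifferentiableAt ℝ (fun u => A₂ u i j) (U q))
    (hA₃ : ∀ i j, DifferentiableAt ℝ (fun u => A₃ u i j) (U q)) (hU : ContDiffAt ℝ 2 U q)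
    (hΨ : ContDiffAt ℝ 2 Ψ q) (hΨy : pdy Ψ q ≠ 0) (v : ℝ × ℝ × ℝ) :
    fderiv ℝ (Lop A₁ A₂ A₃ U Ψ U) q v
      = Lop A₁ A₂ A₃ U Ψ (fun p => fderiv ℝ U p v) q + Cop A₁ A₂ A₃ U Ψ (fun p => fderiv ℝ U p v) q
        + fderiv ℝ (fun p => 1 / pdy Ψ p) q v • (coefMat A₁ A₂ A₃ U Ψ q *ᵥ pdy U q)
        - (1 / pdy Ψ q) •
            ((fderiv ℝ (pdx Ψ) q v • A₁ (U q) + fderiv ℝ (pdz Ψ) q v • A₃ (U q)) *ᵥ pdy U q) := by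
  have hU₁ := hU.differentiableAt two_ne_zero
  have hAU (A : (Fin 4 → ℝ) → Matrix (Fin 4) (Fin 4) ℝ)
      (hA : ∀ i j, DifferentiableAt ℝ (fun u => A u i j) (U q)) (i j : Fin 4) :
      DifferentiableAt ℝ (fun p => A (U p) i j) q :=
    (hA i j).comp q hU₁
  have hUx : DifferentiableAt ℝ (pdx U) q := hU.differentiableAt_fderiv_apply _
  have hUy : DifferentiableAt ℝ (pdy U) q := hU.differentiableAt_fderiv_apply _
  have hUz : DifferentiableAt ℝ (pdz U) q := hU.differentiableAt_fderiv_apply _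
  have hΨx : DifferentiableAt ℝ (pdx Ψ) q := hΨ.differentiableAt_fderiv_apply _
  have hΨy' : DifferentiableAt ℝ (pdy Ψ) q := hΨ.differentiableAt_fderiv_apply _
  have hΨz : DifferentiableAt ℝ (pdz Ψ) q := hΨ.differentiableAt_fderiv_apply _
  have hM := differentiableAt_coefMat_apply hA₁ hA₂ hA₃ hU₁ hΨx hΨz
  have hinv : DifferentiableAt ℝ (fun p => 1 / pdy Ψ p) q := by
    simpa only [one_div] using hΨy'.fun_inv hΨy
  have hterm₁ := differentiableAt_mulVec (hAU A₁ hA₁) hUx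
  have hterm₂ := hinv.fun_smul (differentiableAt_mulVec hM hUy)
  have hterm₃ := differentiableAt_mulVec (hAU A₃ hA₃) hUz
  change fderiv ℝ (fun p => A₁ (U p) *ᵥ pdx U p
      + (1 / pdy Ψ p) • (coefMat A₁ A₂ A₃ U Ψ p *ᵥ pdy U p) + A₃ (U p) *ᵥ pdz U p) q v = _
  rw [fderiv_fun_add (hterm₁.fun_add hterm₂) hterm₃, fderiv_fun_add hterm₁ hterm₂,
    fderiv_fun_smul hinv (differentiableAt_mulVec hM hUy)]
  simp only [_root_.add_apply, _root_.smul_apply, ContinuousLinearMap.smulRight_apply]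
  rw [fderiv_mulVec_apply (hAU A₁ hA₁) hUx, fderiv_mulVec_apply (hAU A₃ hA₃) hUz,
    fderiv_mulVec_apply hM hUy, fderivEntry_comp hA₁ hU₁, fderivEntry_comp hA₃ hU₁,
    fderivEntry_coefMat hA₁ hA₂ hA₃ hU₁ hΨx hΨz, ← dA_eq_fderivEntry, ← dA_eq_fderivEntry]
  have hUxv : fderiv ℝ (pdx U) q v = pdx (fun p => fderiv ℝ U p v) q :=
    hU.fderiv_fderiv_apply_comm _ _
  have hUyv : fderiv ℝ (pdy U) q v = pdy (fun p => fderiv ℝ U p v) q :=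
    hU.fderiv_fderiv_apply_comm _ _
  have hUzv : fderiv ℝ (pdz U) q v = pdz (fun p => fderiv ℝ U p v) q :=
    hU.fderiv_fderiv_apply_comm _ _
  rw [hUxv, hUyv, hUzv]
  simp only [Lop, Cop, sub_mulVec, add_mulVec, smul_mulVec, smul_add]
  module

theorem pdy_Lop_self
    (hA₁ : ∀ i j, DifferentiableAt ℝ (fun u => A₁ u i j) (U q))
    (hA₂ : ∀ i j, DifferentiableAt ℝ (fun u => A₂ u i j) (U q))
    (hA₃ : ∀ i j, DifferentiableAt ℝ (fun u => A₃ u i j) (U q)) (hU : ContDiffAt ℝ 2 U q)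
    (hΨ : ContDiffAt ℝ 2 Ψ q) (hΨy : pdy Ψ q ≠ 0) :
    pdy (Lop A₁ A₂ A₃ U Ψ U) q
      = Lop A₁ A₂ A₃ U Ψ (pdy U) q + Cop A₁ A₂ A₃ U Ψ (pdy U) q
        - (1 / pdy Ψ q) • (Lsymbol A₁ A₂ A₃ U Ψ (pdy Ψ) q *ᵥ pdy U q) := by
  have hinv : fderiv ℝ (fun p => 1 / pdy Ψ p) q (0, 1, 0) = -pdy (pdy Ψ) q / pdy Ψ q ^ 2 := by
    have hΨy' : DifferentiableAt ℝ (pdy Ψ) q := hΨ.differentiableAt_fderiv_apply _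
    rw [fderiv_div_apply (differentiableAt_const 1) hΨy' hΨy]
    simp [pdy]
  have hxy : fderiv ℝ (pdx Ψ) q (0, 1, 0) = pdx (pdy Ψ) q := hΨ.fderiv_fderiv_apply_comm _ _
  have hzy : fderiv ℝ (pdz Ψ) q (0, 1, 0) = pdz (pdy Ψ) q := hΨ.fderiv_fderiv_apply_comm _ _
  have hUy : (fun p => fderiv ℝ U p (0, 1, 0)) = pdy U := rfl
  refine (fderiv_Lop_self hA₁ hA₂ hA₃ hU hΨ hΨy (0, 1, 0)).trans ?_
  rw [hinv, hxy, hzy, hUy]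
  simp only [Lsymbol, add_mulVec, smul_mulVec]
  match_scalars <;> field_simp

end GoodUnknown

/-- **Alinhac's good-unknown identity**: with `V̇ := V − (Φ/∂ᵧΨ)∂ᵧU`, one has
`L′(U,∇Ψ)(V,Φ) = L(U,∇Ψ)V̇ + C(U,∇U,∇Ψ)V̇ + (Φ/∂ᵧΨ)∂ᵧ[L(U,∇Ψ)U]` pointwise. -/
theorem stmt7 (A₁ A₂ A₃ : (Fin 4 → ℝ) → Matrix (Fin 4) (Fin 4) ℝ)
    (hA₁ : ∀ i j, ContDiff ℝ 1 fun u => A₁ u i j)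
    (hA₂ : ∀ i j, ContDiff ℝ 1 fun u => A₂ u i j)
    (hA₃ : ∀ i j, ContDiff ℝ 1 fun u => A₃ u i j)
    (Ω : Set (ℝ × ℝ × ℝ)) (hΩ : IsOpen Ω)
    (U : ℝ × ℝ × ℝ → Fin 4 → ℝ) (Ψ : ℝ × ℝ × ℝ → ℝ)
    (hU : ContDiffOn ℝ 2 U Ω) (hΨ : ContDiffOn ℝ 2 Ψ Ω)
    (hΨy : ∀ q ∈ Ω, pdy Ψ q ≠ 0)
    (V : ℝ × ℝ × ℝ → Fin 4 → ℝ) (Φ : ℝ × ℝ × ℝ → ℝ)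
    (hV : ContDiffOn ℝ 1 V Ω) (hΦ : ContDiffOn ℝ 1 Φ Ω) :
    ∀ q ∈ Ω,
      L'op A₁ A₂ A₃ U Ψ V Φ q =
        Lop A₁ A₂ A₃ U Ψ (fun q' => V q' - (Φ q' / pdy Ψ q') • pdy U q') q
          + Cop A₁ A₂ A₃ U Ψ (fun q' => V q' - (Φ q' / pdy Ψ q') • pdy U q') q
          + (Φ q / pdy Ψ q) • pdy (Lop A₁ A₂ A₃ U Ψ U) q := by
  intro q hq
  have hΩq := hΩ.mem_nhds hq
  have hUq : ContDiffAt ℝ 2 U q := hU.contDiffAt hΩq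
  have hΨq : ContDiffAt ℝ 2 Ψ q := hΨ.contDiffAt hΩq
  have hVq := (hV.contDiffAt hΩq).differentiableAt one_ne_zero
  have hΦq := (hΦ.contDiffAt hΩq).differentiableAt one_ne_zero
  have hAq (A : (Fin 4 → ℝ) → Matrix (Fin 4) (Fin 4) ℝ) (hA : ∀ i j, ContDiff ℝ 1 fun u => A u i j)
      (i j : Fin 4) : DifferentiableAt ℝ (fun u => A u i j) (U q) :=
    (hA i j).differentiable one_ne_zero _
  have hUy : DifferentiableAt ℝ (pdy U) q := hUq.differentiableAt_fderiv_apply _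
  have hΨy' : DifferentiableAt ℝ (pdy Ψ) q := hΨq.differentiableAt_fderiv_apply _
  have hg : DifferentiableAt ℝ (fun p => Φ p / pdy Ψ p) q := by
    simpa only [div_eq_mul_inv] using hΦq.fun_mul (hΨy'.fun_inv (hΨy q hq))
  rw [L'op_eq_Lop_add_Cop_sub, Lop_sub hVq (hg.fun_smul hUy), Lop_smul hg hUy, Cop_sub_smul,
    pdy_Lop_self (hAq A₁ hA₁) (hAq A₂ hA₂) (hAq A₃ hA₃) hUq hΨq (hΨy q hq),
    Lsymbol_div hΦq hΨy' (hΨy q hq)]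
  simp only [sub_mulVec, smul_mulVec]
  module
end

section
/- (Weighted L² transport estimate.) Let a > 0, b ∈ ℝ, γ > 0, and let ξ : ℝ³ → ℝ be a C¹ function with compact support. Set h := a∂ₓξ + b∂_zξ. Then ∫_{ℝ³} e^{−2γx} ξ(x,y,z)² dx dy dz ≤ (aγ)^{−2} ∫_{ℝ³} e^{−2γx} h(x,y,z)² dx dy dz. -/
/-!
`h` is the derivative `∂ᵥξ` of `ξ` along `v = (a, 0, b)`, and the weight is `e^{-2ℓ}` with
`ℓ(x, y, z) = γx`, so `∂ᵥ e^{-2ℓ} = -2ℓ(v) e^{-2ℓ}` with `ℓ(v) = γa`. Integrating by parts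
along `v` (no boundary terms, by compact support) gives `ℓ(v) ∫ e^{-2ℓ} ξ² = ∫ e^{-2ℓ} ξ ∂ᵥξ`,
and the pointwise AM-GM inequality `2ℓ(v) ξ ∂ᵥξ ≤ ℓ(v)² ξ² + (∂ᵥξ)²` turns this into
`ℓ(v)² ∫ e^{-2ℓ} ξ² ≤ ∫ e^{-2ℓ} (∂ᵥξ)²`.
-/

open MeasureTheory

section WeightedPoincare

variable {E : Type*} [NormedAddCommGroup E] [NormedSpace ℝ E]

lemma hasFDerivAt_exp_neg_two_mul (L : E →L[ℝ] ℝ) (x : E) :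
    HasFDerivAt (fun x => Real.exp (-2 * L x)) ((-2 * Real.exp (-2 * L x)) • L) x := by
  convert ((L.hasFDerivAt (x := x)).const_mul (-2)).exp using 1
  rw [smul_smul, mul_comm]

lemma integrable_exp_neg_two_mul_mul [MeasurableSpace E] [OpensMeasurableSpace E]
    {μ : Measure E} [IsFiniteMeasureOnCompacts μ] (L : E →L[ℝ] ℝ) {g : E → ℝ}
    (hg : Continuous g) (hgs : HasCompactSupport g) :
    Integrable (fun x => Real.exp (-2 * L x) * g x) μ :=
  (by fun_prop : Continuous _).integrable_of_hasCompactSupport hgs.mul_left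

variable [FiniteDimensional ℝ E] [MeasurableSpace E] [BorelSpace E] {μ : Measure E}
  [μ.IsAddHaarMeasure] {ξ : E → ℝ}

lemma mul_integral_exp_neg_two_mul_sq (L : E →L[ℝ] ℝ) (v : E) (hξ : ContDiff ℝ 1 ξ)
    (hs : HasCompactSupport ξ) :
    L v * ∫ x, Real.exp (-2 * L x) * ξ x ^ 2 ∂μ =
      ∫ x, Real.exp (-2 * L x) * (ξ x * fderiv ℝ ξ x v) ∂μ := by
  set w : E → ℝ := fun x => Real.exp (-2 * L x)
  have hdξ : Continuous fun x => fderiv ℝ ξ x v :=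
    (hξ.continuous_fderiv one_ne_zero).clm_apply continuous_const
  have hdiff : Differentiable ℝ ξ := hξ.differentiable one_ne_zero
  have hdw : ∀ x, fderiv ℝ w x v = -2 * L v * w x := fun x => by
    rw [(hasFDerivAt_exp_neg_two_mul L x).fderiv]
    simp only [smul_apply, smul_eq_mul, w]; ring
  have hdξ2 : ∀ x, fderiv ℝ (fun x => ξ x ^ 2) x v = 2 * (ξ x * fderiv ℝ ξ x v) := fun x => by
    rw [((hdiff x).hasFDerivAt.pow 2).fderiv]
    simp only [Nat.add_one_sub_one, pow_one, nsmul_eq_mul, Nat.cast_ofNat, smul_apply, smul_eq_mul]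
    ring
  have hs2 : HasCompactSupport fun x => ξ x ^ 2 := hs.comp_left (g := (· ^ 2)) (by simp)
  have ibp := integral_mul_fderiv_eq_neg_fderiv_mul_of_integrable (μ := μ) (f := w)
    (g := fun x => ξ x ^ 2) (v := v) ?_ ?_ ?_ (fun x _ => by fun_prop) (fun x _ => by fun_prop)
  · simp only [hdw, hdξ2] at ibp
    have hright : ∫ x, w x * (2 * (ξ x * fderiv ℝ ξ x v)) ∂μ =
        2 * ∫ x, w x * (ξ x * fderiv ℝ ξ x v) ∂μ := by
      rw [← integral_const_mul]; congr 1; ext x; ring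
    have hleft : ∫ x, -2 * L v * w x * ξ x ^ 2 ∂μ = -2 * L v * ∫ x, w x * ξ x ^ 2 ∂μ := by
      rw [← integral_const_mul]; congr 1; ext x; ring
    linarith
  · simp only [hdw, mul_assoc (-2 * L v)]
    exact (integrable_exp_neg_two_mul_mul (μ := μ) L (by fun_prop) hs2).const_mul _
  · simp only [hdξ2]
    exact integrable_exp_neg_two_mul_mul L (by fun_prop) (hs.mul_right.mul_left)
  · exact integrable_exp_neg_two_mul_mul L (by fun_prop) hs2

theorem sq_mul_integral_exp_neg_two_mul_sq_le (L : E →L[ℝ] ℝ) (v : E) (hξ : ContDiff ℝ 1 ξ)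
    (hs : HasCompactSupport ξ) :
    L v ^ 2 * ∫ x, Real.exp (-2 * L x) * ξ x ^ 2 ∂μ ≤
      ∫ x, Real.exp (-2 * L x) * fderiv ℝ ξ x v ^ 2 ∂μ := by
  have hdξ : Continuous fun x => fderiv ℝ ξ x v :=
    (hξ.continuous_fderiv one_ne_zero).clm_apply continuous_const
  have hdξs : HasCompactSupport fun x => fderiv ℝ ξ x v := hs.fderiv_apply ℝ v
  have hI : Integrable (fun x => Real.exp (-2 * L x) * ξ x ^ 2) μ :=
    integrable_exp_neg_two_mul_mul L (by fun_prop) (hs.comp_left (g := (· ^ 2)) (by simp))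
  have hJ : Integrable (fun x => Real.exp (-2 * L x) * fderiv ℝ ξ x v ^ 2) μ :=
    integrable_exp_neg_two_mul_mul L (by fun_prop) (hdξs.comp_left (g := (· ^ 2)) (by simp))
  have hK : Integrable (fun x => Real.exp (-2 * L x) * (ξ x * fderiv ℝ ξ x v)) μ :=
    integrable_exp_neg_two_mul_mul L (hξ.continuous.mul hdξ) hs.mul_right
  have amgm : ∀ x, 2 * L v * (Real.exp (-2 * L x) * (ξ x * fderiv ℝ ξ x v)) ≤
      L v ^ 2 * (Real.exp (-2 * L x) * ξ x ^ 2) + Real.exp (-2 * L x) * fderiv ℝ ξ x v ^ 2 := by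
    intro x
    have := mul_nonneg (Real.exp_pos (-2 * L x)).le (sq_nonneg (L v * ξ x - fderiv ℝ ξ x v))
    nlinarith
  have h : ∫ x, 2 * L v * (Real.exp (-2 * L x) * (ξ x * fderiv ℝ ξ x v)) ∂μ ≤
      ∫ x, L v ^ 2 * (Real.exp (-2 * L x) * ξ x ^ 2) +
        Real.exp (-2 * L x) * fderiv ℝ ξ x v ^ 2 ∂μ :=
    integral_mono (hK.const_mul _) ((hI.const_mul _).add hJ) amgm
  rw [integral_const_mul, integral_add (hI.const_mul _) hJ, integral_const_mul,
    ← mul_integral_exp_neg_two_mul_sq L v hξ hs] at h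
  nlinarith

end WeightedPoincare

lemma fderiv_apply_eq_pdx_add_pdz {F : Type*} [NormedAddCommGroup F] [NormedSpace ℝ F]
    (f : ℝ × ℝ × ℝ → F) (q : ℝ × ℝ × ℝ) (a b : ℝ) :
    fderiv ℝ f q (a, 0, b) = a • pdx f q + b • pdz f q := by
  have hv : ((a, 0, b) : ℝ × ℝ × ℝ) = a • (1, 0, 0) + b • (0, 0, 1) := by simp
  rw [hv, map_add, map_smul, map_smul, pdx, pdz]

/-- **Weighted L² transport estimate**: for `a > 0`, `γ > 0` and a compactly
supported `C¹` function `ξ`, with `h := a∂ₓξ + b∂_zξ` one has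
`∫ e^{−2γx} ξ² ≤ (aγ)⁻² ∫ e^{−2γx} h²`. -/
theorem stmt10 (a b γ : ℝ) (ha : 0 < a) (hγ : 0 < γ)
    (ξ : ℝ × ℝ × ℝ → ℝ) (hξ : ContDiff ℝ 1 ξ) (hsupp : HasCompactSupport ξ) :
    ∫ q : ℝ × ℝ × ℝ, Real.exp (-2 * γ * q.1) * ξ q ^ 2 ≤
      ((a * γ) ^ 2)⁻¹ *
        ∫ q : ℝ × ℝ × ℝ, Real.exp (-2 * γ * q.1) * (a * pdx ξ q + b * pdz ξ q) ^ 2 := by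
  -- instance search does not see through `volume = volume.prod volume` on a product
  have : (volume : Measure (ℝ × ℝ × ℝ)).IsAddHaarMeasure := Measure.prod.instIsAddHaarMeasure _ _
  set L : ℝ × ℝ × ℝ →L[ℝ] ℝ := γ • ContinuousLinearMap.fst ℝ ℝ (ℝ × ℝ)
  have hL : ∀ q, L q = γ * q.1 := fun q => rfl
  have h := sq_mul_integral_exp_neg_two_mul_sq_le (μ := volume) L (a, 0, b) hξ hsupp
  simp only [hL, fderiv_apply_eq_pdx_add_pdz, smul_eq_mul, ← mul_assoc] at h
  rw [le_inv_mul_iff₀ (by positivity), mul_comm a γ]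
  exact h
end
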